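/- Let L, c > 0 and 0 < ξ < c. For N ≥ 1 set h = L/(N+1), let A_h be the (N+1)×(N+1) matrix equal to (c²/h²) times the tridiagonal matrix with diagonal entries 2 except the last diagonal entry 1 and off-diagonal entries −1, let M be the (N+1)×(N+1) tridiagonal matrix with diagonal entries 2/3 except the last entry 1/3 and off-diagonal entries 1/6, and let 𝒜_h^{FEM}(ξ) be the 2(N+1)×2(N+1) block matrix [[0, I], [−M⁻¹A_h, −(ξ/h)·M⁻¹E]], where E is the matrix whose only nonzero entry is E_{N+1,N+1} = 1. Then there exist C > 0 and N₀ ∈ ℕ such that for all N ≥ N₀ and every eigenvalue λ of 𝒜_h^{FEM}(ξ), there exists an integer j ∈ {0, 1, …, 4N+4} with h²|λ|² ≤ 12c²·sin²( 2jπ/(4N+5) ) + C·h; in particular h²|λ|² ≤ 12c² + C·h. -/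

import Mathlib

open Matrix

/-- The matrix (c²/h²) × tridiag(−1, 2, −1) of size n, with last diagonal entry 1
instead of 2. -/
noncomputable def stiff (c h : ℝ) (n : ℕ) : Matrix (Fin n) (Fin n) ℝ :=
  Matrix.of fun i j =>
    (c^2/h^2) * (if i = j then (if (i:ℕ) = n - 1 then 1 else 2)
      else if (i:ℕ)+1 = (j:ℕ) ∨ (j:ℕ)+1 = (i:ℕ) then -1 else 0)

/-- The tridiagonal mass matrix of size n: diagonal 2/3 except last entry 1/3,
off-diagonal entries 1/6. -/
noncomputable def massFEM (n : ℕ) : Matrix (Fin n) (Fin n) ℝ :=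
  Matrix.of fun i j =>
    if i = j then (if (i:ℕ) = n - 1 then 1/3 else 2/3)
    else if (i:ℕ)+1 = (j:ℕ) ∨ (j:ℕ)+1 = (i:ℕ) then 1/6 else 0

/-- The (N+1)×(N+1) matrix whose only nonzero entry is E_{N+1,N+1} = 1. -/
def cornerE (N : ℕ) : Matrix (Fin (N+1)) (Fin (N+1)) ℝ :=
  Matrix.of fun i j => if (i:ℕ) = N ∧ (j:ℕ) = N then 1 else 0

/-- The 2(N+1)×2(N+1) finite-element first-order system matrix
𝒜_h^{FEM}(ξ) = [[0, I], [−M⁻¹A_h, −(ξ/h)·M⁻¹E]]. -/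
noncomputable def sysFEM (c h ξ : ℝ) (N : ℕ) :
    Matrix (Fin (N+1) ⊕ Fin (N+1)) (Fin (N+1) ⊕ Fin (N+1)) ℝ :=
  Matrix.fromBlocks 0 1 (-((massFEM (N+1))⁻¹ * stiff c h (N+1)))
    (-(ξ/h) • ((massFEM (N+1))⁻¹ * cornerE N))

/-!
With `P` the down-shift matrix, `M = (PᵀP + I + (I + P)ᵀ(I + P)) / 6` and
`A_h = (c / h)² (I - P)ᵀ(I - P)`, while `E = I - PᵀP`. Hence, for a complex vector `u`, the
Hermitian forms `m = u* M u`, `k = u* A_h u`, `t = u* E u` are sums of squared norms, and the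
sum-of-squares identities `12 m - (h / c)² k = 3 ‖u + P u‖²` and
`12 m - 2√3 t = ‖(√3 + 1) P u + (√3 - 1) u‖²` give `0 ≤ k ≤ 12 (c / h)² m` and
`0 ≤ t ≤ 2√3 m`, with `m > 0` for `u ≠ 0`.

An eigenvector `(u, λ u)` of `𝒜_h^{FEM}(ξ)` satisfies `λ² M u + λ (ξ / h) E u + A_h u = 0`, so
`m λ² + (ξ / h) t λ + k = 0`. A non-real root has `|λ|² = k / m ≤ 12 (c / h)²`, and a real root
has `|λ| ≤ (ξ / h) t / m ≤ 2√3 ξ / h`; either way `h² |λ|² ≤ 12 c²` as `0 < ξ < c`. The sine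
bound follows with `j = N + 1`, whose angle `π / 2 - π / (2 (4N + 5))` makes the sine term
`12 c² - O(h²)`.
-/

open ComplexOrder Real

lemma sq_le_of_real_root {m t k a b x : ℝ} (hm : 0 < m) (ht : 0 ≤ t) (hta : t ≤ a * m)
    (hk : 0 ≤ k) (hx : m * x ^ 2 + b * t * x + k = 0) : x ^ 2 ≤ (a * b) ^ 2 := by
  have ha : 0 ≤ a := by nlinarith
  have hmx : m * |x| ^ 2 ≤ m * (a * |b| * |x|) :=
    calc m * |x| ^ 2 = -(b * t * x) - k := by rw [sq_abs]; linarith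
      _ ≤ |b * t * x| := by linarith [neg_le_abs (b * t * x)]
      _ = |b| * t * |x| := by rw [abs_mul, abs_mul, abs_of_nonneg ht]
      _ ≤ |b| * (a * m) * |x| := by gcongr
      _ = m * (a * |b| * |x|) := by ring
  have hx' : |x| ≤ a * |b| := by
    by_contra! h
    have hx0 : 0 < |x| := (mul_nonneg ha (abs_nonneg b)).trans_lt h
    have := le_of_mul_le_mul_left hmx hm
    nlinarith [mul_lt_mul_of_pos_right h hx0]
  calc x ^ 2 = |x| ^ 2 := (sq_abs x).symm
    _ ≤ (a * |b|) ^ 2 := by gcongr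
    _ = (a * b) ^ 2 := by rw [mul_pow, mul_pow, sq_abs]

/-- A non-real root has `|z|² = k / m`, the product of the roots. -/
lemma norm_sq_le_of_quadratic_eq_zero {m t k z : ℂ} {a b K : ℝ} (hm : 0 < m) (ht : 0 ≤ t)
    (hta : t ≤ a * m) (hk : 0 ≤ k) (hkK : k ≤ K * m) (hab : (a * b) ^ 2 ≤ K)
    (hz : m * z ^ 2 + b * t * z + k = 0) : ‖z‖ ^ 2 ≤ K := by
  have real_of_nonneg {w : ℂ} (hw : 0 ≤ w) : ∃ r : ℝ, w = r :=
    ⟨w.re, Complex.eq_re_of_ofReal_le (r := 0) (by simpa using hw)⟩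
  obtain ⟨m, rfl⟩ := real_of_nonneg hm.le
  obtain ⟨t, rfl⟩ := real_of_nonneg ht
  obtain ⟨k, rfl⟩ := real_of_nonneg hk
  rw [Complex.zero_lt_real] at hm
  rw [Complex.zero_le_real] at ht hk
  rw [← Complex.ofReal_mul, Complex.real_le_real] at hta hkK
  have hre : m * (z.re ^ 2 - z.im ^ 2) + b * t * z.re + k = 0 := by
    simpa [sq] using congrArg Complex.re hz
  have him : z.im * (2 * m * z.re + b * t) = 0 := by
    have := congrArg Complex.im hz
    simp only [sq, Complex.add_im, Complex.mul_im, Complex.mul_re, Complex.ofReal_re,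
      Complex.ofReal_im, Complex.zero_im, zero_mul, mul_zero, add_zero, sub_zero] at this
    linear_combination this
  rw [Complex.sq_norm, Complex.normSq_apply]
  rcases mul_eq_zero.mp him with hreal | hcomplex
  · rw [hreal] at hre ⊢
    have := sq_le_of_real_root (b := b) hm ht hta hk (x := z.re) (by linear_combination hre)
    nlinarith
  · have : m * (z.re * z.re + z.im * z.im) = k := by linear_combination -hre + z.re * hcomplex
    nlinarith

section HermForm

variable {n : Type*} [Fintype n]

/-- In `ComplexOrder`, `0 ≤ hermForm X u` says that the form is real and nonnegative. -/
def hermForm (X : Matrix n n ℝ) (u : n → ℂ) : ℂ := star u ⬝ᵥ X.map (fun x => (x : ℂ)) *ᵥ u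

lemma hermForm_add (X Y : Matrix n n ℝ) (u : n → ℂ) :
    hermForm (X + Y) u = hermForm X u + hermForm Y u := by
  simp [hermForm, Matrix.map_add, Matrix.add_mulVec, dotProduct_add]

lemma hermForm_sub (X Y : Matrix n n ℝ) (u : n → ℂ) :
    hermForm (X - Y) u = hermForm X u - hermForm Y u := by
  simp [hermForm, Matrix.map_sub, Matrix.sub_mulVec, dotProduct_sub]

lemma hermForm_smul (r : ℝ) (X : Matrix n n ℝ) (u : n → ℂ) :
    hermForm (r • X) u = r * hermForm X u := by
  simp [hermForm, Matrix.map_smul, Matrix.smul_mulVec, dotProduct_smul]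

lemma hermForm_one [DecidableEq n] (u : n → ℂ) : hermForm 1 u = star u ⬝ᵥ u := by
  simp [hermForm]

lemma hermForm_transpose (X : Matrix n n ℝ) (u : n → ℂ) :
    hermForm Xᵀ u = star (X.map (fun x => (x : ℂ)) *ᵥ u) ⬝ᵥ u := by
  rw [hermForm, Matrix.dotProduct_mulVec, Matrix.star_mulVec, Matrix.transpose_map]
  congr 2
  ext i j
  simp

end HermForm

def shiftMat (n : ℕ) : Matrix (Fin n) (Fin n) ℝ :=
  Matrix.of fun i j => if (j : ℕ) + 1 = i then 1 else 0

lemma massFEM_eq (N : ℕ) :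
    massFEM (N + 1) = (6 : ℝ)⁻¹ • ((4 : ℝ) • 1 - (2 : ℝ) • cornerE N + shiftMat (N + 1)
      + (shiftMat (N + 1))ᵀ) := by
  ext i j
  simp only [massFEM, cornerE, shiftMat, Matrix.smul_apply, Matrix.add_apply, Matrix.sub_apply,
    Matrix.one_apply, Matrix.transpose_apply, Matrix.of_apply, Fin.ext_iff, smul_eq_mul]
  split_ifs <;> first | (exfalso; omega) | ring

lemma stiff_eq (c h : ℝ) (N : ℕ) :
    stiff c h (N + 1) = (c ^ 2 / h ^ 2) • ((2 : ℝ) • 1 - cornerE N - shiftMat (N + 1)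
      - (shiftMat (N + 1))ᵀ) := by
  ext i j
  simp only [stiff, cornerE, shiftMat, Matrix.smul_apply, Matrix.sub_apply,
    Matrix.one_apply, Matrix.transpose_apply, Matrix.of_apply, Fin.ext_iff, smul_eq_mul]
  split_ifs <;> first | (exfalso; omega) | ring

section FEMForms

variable {N : ℕ} (u : Fin (N + 1) → ℂ)

def shiftDown : Fin (N + 1) → ℂ := Fin.cons 0 (u ∘ Fin.castSucc)

lemma shiftMat_mulVec : (shiftMat (N + 1)).map (fun x => (x : ℂ)) *ᵥ u = shiftDown u := by
  ext i
  refine Fin.cases ?_ (fun k => ?_) i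
  · simp [shiftMat, shiftDown, Matrix.mulVec, dotProduct]
  · have hk : ∀ x : Fin (N + 1), (x : ℕ) = k ↔ x = k.castSucc := fun x => by simp [Fin.ext_iff]
    simp [shiftMat, shiftDown, Matrix.mulVec, dotProduct, hk, apply_ite Complex.ofReal]

lemma star_shiftDown_dotProduct_self :
    star (shiftDown u) ⬝ᵥ shiftDown u = star u ⬝ᵥ u - star (u (Fin.last N)) * u (Fin.last N) := by
  rw [dotProduct, dotProduct, Fin.sum_univ_succ,
    Fin.sum_univ_castSucc (f := fun i => star u i * u i)]
  simp [shiftDown]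

lemma hermForm_cornerE : hermForm (cornerE N) u = star (u (Fin.last N)) * u (Fin.last N) := by
  have hlast : ∀ i : Fin (N + 1), (i : ℕ) = N ↔ i = Fin.last N := fun i => by simp [Fin.ext_iff]
  simp [hermForm, cornerE, Matrix.mulVec, dotProduct, hlast, ite_and, apply_ite Complex.ofReal]

lemma hermForm_shiftMat : hermForm (shiftMat (N + 1)) u = star u ⬝ᵥ shiftDown u := by
  rw [hermForm, shiftMat_mulVec]

lemma hermForm_shiftMat_transpose : hermForm (shiftMat (N + 1))ᵀ u = star (shiftDown u) ⬝ᵥ u := by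
  rw [hermForm_transpose, shiftMat_mulVec]

lemma hermForm_massFEM : hermForm (massFEM (N + 1)) u = 6⁻¹ * (star (shiftDown u) ⬝ᵥ shiftDown u
    + star u ⬝ᵥ u + star (u + shiftDown u) ⬝ᵥ (u + shiftDown u)) := by
  rw [massFEM_eq, hermForm_smul, hermForm_add, hermForm_add, hermForm_sub, hermForm_smul,
    hermForm_smul, hermForm_one, hermForm_cornerE, hermForm_shiftMat, hermForm_shiftMat_transpose]
  simp only [star_add, dotProduct_add, add_dotProduct, star_shiftDown_dotProduct_self]
  push_cast
  ring

lemma hermForm_stiff (c h : ℝ) : hermForm (stiff c h (N + 1)) u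
    = (c ^ 2 / h ^ 2 : ℝ) * star (u - shiftDown u) ⬝ᵥ (u - shiftDown u) := by
  rw [stiff_eq, hermForm_smul, hermForm_sub, hermForm_sub, hermForm_sub, hermForm_smul,
    hermForm_one, hermForm_cornerE, hermForm_shiftMat, hermForm_shiftMat_transpose]
  simp only [star_sub, dotProduct_sub, sub_dotProduct, star_shiftDown_dotProduct_self]
  push_cast
  ring

lemma hermForm_massFEM_pos (hu : u ≠ 0) : 0 < hermForm (massFEM (N + 1)) u := by
  rw [hermForm_massFEM]
  have hu' : 0 < star u ⬝ᵥ u := dotProduct_star_self_pos_iff.mpr hu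
  exact mul_pos (by norm_num) (add_pos_of_pos_of_nonneg
    (add_pos_of_nonneg_of_pos (dotProduct_star_self_nonneg _) hu') (dotProduct_star_self_nonneg _))

lemma hermForm_stiff_nonneg (c h : ℝ) : 0 ≤ hermForm (stiff c h (N + 1)) u := by
  rw [hermForm_stiff]
  exact mul_nonneg (Complex.zero_le_real.mpr (by positivity)) (dotProduct_star_self_nonneg _)

lemma hermForm_stiff_le (c h : ℝ) :
    hermForm (stiff c h (N + 1)) u ≤ (12 * c ^ 2 / h ^ 2 : ℝ) * hermForm (massFEM (N + 1)) u := by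
  have key : (12 * c ^ 2 / h ^ 2 : ℝ) * hermForm (massFEM (N + 1)) u
        - hermForm (stiff c h (N + 1)) u
      = (3 * c ^ 2 / h ^ 2 : ℝ) * star (u + shiftDown u) ⬝ᵥ (u + shiftDown u) := by
    rw [hermForm_massFEM, hermForm_stiff]
    simp only [star_add, star_sub, dotProduct_add, add_dotProduct, dotProduct_sub, sub_dotProduct]
    push_cast
    ring
  rw [← sub_nonneg, key]
  exact mul_nonneg (Complex.zero_le_real.mpr (by positivity)) (dotProduct_star_self_nonneg _)

lemma hermForm_cornerE_nonneg : 0 ≤ hermForm (cornerE N) u := by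
  rw [hermForm_cornerE]
  exact star_mul_self_nonneg _

lemma hermForm_cornerE_le :
    hermForm (cornerE N) u ≤ (2 * √3 : ℝ) * hermForm (massFEM (N + 1)) u := by
  have h3 : (√3 : ℂ) ^ 2 = 3 := by exact_mod_cast Real.sq_sqrt (by norm_num : (0 : ℝ) ≤ 3)
  have key : (2 * √3 : ℝ) * hermForm (massFEM (N + 1)) u - hermForm (cornerE N) u
      = (√3 / 6 : ℝ) * star ((√3 + 1 : ℂ) • shiftDown u + (√3 - 1 : ℂ) • u)
          ⬝ᵥ ((√3 + 1 : ℂ) • shiftDown u + (√3 - 1 : ℂ) • u) := by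
    rw [hermForm_massFEM, hermForm_cornerE]
    have hs : ∀ r : ℝ, star (r : ℂ) = r := Complex.conj_ofReal
    simp only [star_add, star_sub, star_one, hs, star_smul, dotProduct_add, add_dotProduct,
      dotProduct_smul, smul_dotProduct, smul_eq_mul, star_shiftDown_dotProduct_self]
    set S := star u ⬝ᵥ u
    set T := star (u (Fin.last N)) * u (Fin.last N)
    set X := star u ⬝ᵥ shiftDown u
    set Y := star (shiftDown u) ⬝ᵥ u
    push_cast
    linear_combination (T / 3 - √3 * (2 * S - T + X + Y) / 6) * h3
  rw [← sub_nonneg, key]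
  exact mul_nonneg (Complex.zero_le_real.mpr (by positivity)) (dotProduct_star_self_nonneg _)

end FEMForms

lemma massFEM_det_ne_zero (N : ℕ) : (massFEM (N + 1)).det ≠ 0 := by
  intro h0
  have hC : ((massFEM (N + 1)).map (fun x => (x : ℂ))).det = 0 := by
    change (Complex.ofRealHom.mapMatrix (massFEM (N + 1))).det = 0
    rw [← RingHom.map_det, h0, map_zero]
  obtain ⟨u, hu, hMu⟩ := Matrix.exists_mulVec_eq_zero_iff.mpr hC
  have hpos := hermForm_massFEM_pos u hu
  rw [hermForm, hMu, dotProduct_zero] at hpos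
  exact lt_irrefl 0 hpos

lemma sysFEM_eigenvector_pencil {c h ξ : ℝ} {N : ℕ} {z : ℂ} {u v : Fin (N + 1) → ℂ}
    (hw : (sysFEM c h ξ N).map (fun x => (x : ℂ)) *ᵥ Sum.elim u v = z • Sum.elim u v) :
    v = z • u ∧ z ^ 2 • (massFEM (N + 1)).map (fun x => (x : ℂ)) *ᵥ u
      + (z * (ξ / h : ℝ)) • (cornerE N).map (fun x => (x : ℂ)) *ᵥ u
      + (stiff c h (N + 1)).map (fun x => (x : ℂ)) *ᵥ u = 0 := by
  rw [sysFEM, fromBlocks_map, fromBlocks_mulVec] at hw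
  have top : v = z • u := by
    ext i
    simpa using congrFun hw (Sum.inl i)
  have bot := congrArg (· ∘ Sum.inr) hw
  simp only [Sum.elim_comp_inl, Sum.elim_comp_inr, Pi.smul_comp] at bot
  refine ⟨top, ?_⟩
  have hM : massFEM (N + 1) * (massFEM (N + 1))⁻¹ = 1 :=
    Matrix.mul_nonsing_inv _ (massFEM_det_ne_zero N).isUnit
  have hcoe : (fun x : ℝ => (x : ℂ)) = Complex.ofRealHom := rfl
  have := congrArg ((massFEM (N + 1)).map (fun x => (x : ℂ)) *ᵥ ·) bot
  rw [hcoe] at this ⊢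
  simp only [mulVec_add, mulVec_mulVec, ← Matrix.map_mul, Matrix.mul_neg, Matrix.mul_smul,
    ← Matrix.mul_assoc, hM, Matrix.one_mul] at this
  simp only [Matrix.map_neg _ (map_neg Complex.ofRealHom),
    Matrix.map_smul Complex.ofRealHom (-(ξ / h)) (fun a => by simp [Complex.real_smul]),
    neg_mulVec, smul_mulVec, top, mulVec_smul] at this
  linear_combination (norm := module) -this

theorem sysFEM_eigenvalue_norm_sq_le {c h ξ : ℝ} (hξ : ξ ^ 2 ≤ c ^ 2) {N : ℕ} {z : ℂ}
    {w : Fin (N + 1) ⊕ Fin (N + 1) → ℂ} (hw0 : w ≠ 0)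
    (hw : (sysFEM c h ξ N).map (fun x => (x : ℂ)) *ᵥ w = z • w) :
    h ^ 2 * ‖z‖ ^ 2 ≤ 12 * c ^ 2 := by
  obtain ⟨u, v, rfl⟩ : ∃ u v, w = Sum.elim u v := ⟨_, _, (Sum.elim_comp_inl_inr w).symm⟩
  obtain ⟨hv, hpencil⟩ := sysFEM_eigenvector_pencil hw
  have hu : u ≠ 0 := by
    rintro rfl
    simp [hv] at hw0
  have hq : z ^ 2 * hermForm (massFEM (N + 1)) u + z * (ξ / h : ℝ) * hermForm (cornerE N) u
      + hermForm (stiff c h (N + 1)) u = 0 := by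
    simpa [hermForm, dotProduct_add, dotProduct_smul, mul_assoc] using
      congrArg (star u ⬝ᵥ ·) hpencil
  have hab : (2 * √3 * (ξ / h)) ^ 2 ≤ 12 * c ^ 2 / h ^ 2 := by
    rw [mul_pow, mul_pow, Real.sq_sqrt (by norm_num), div_pow, mul_div_assoc]
    gcongr
    norm_num
  have hz := norm_sq_le_of_quadratic_eq_zero (z := z) (hermForm_massFEM_pos u hu)
    (hermForm_cornerE_nonneg u) (hermForm_cornerE_le u) (hermForm_stiff_nonneg u c h)
    (hermForm_stiff_le u c h) hab (by linear_combination hq)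
  rcases eq_or_ne h 0 with rfl | hh
  · rw [zero_pow two_ne_zero, zero_mul]
    positivity
  · calc h ^ 2 * ‖z‖ ^ 2 ≤ h ^ 2 * (12 * c ^ 2 / h ^ 2) := by gcongr
      _ = 12 * c ^ 2 := by field_simp

lemma one_sub_le_sin_sq_angle_succ (N : ℕ) :
    1 - 1 / (4 * ((N : ℝ) + 1) ^ 2) ≤ sin (2 * ((N : ℝ) + 1) * π / (4 * N + 5)) ^ 2 := by
  have hangle : 2 * ((N : ℝ) + 1) * π / (4 * N + 5) = π / 2 - π / (2 * (4 * N + 5)) := by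
    field_simp
    ring
  set δ := π / (2 * (4 * N + 5))
  have hδ : δ ≤ 1 / (2 * ((N : ℝ) + 1)) := by
    rw [div_le_div_iff₀ (by positivity) (by positivity)]
    nlinarith [pi_le_four]
  rw [hangle, sin_pi_div_two_sub, cos_sq']
  calc 1 - 1 / (4 * ((N : ℝ) + 1) ^ 2) = 1 - (1 / (2 * ((N : ℝ) + 1))) ^ 2 := by
        rw [div_pow, mul_pow]; norm_num
    _ ≤ 1 - δ ^ 2 := by gcongr
    _ ≤ 1 - sin δ ^ 2 := by linarith [sin_sq_le_sq (x := δ)]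

/-- uniform eigenvalue estimates for 𝒜_h^{FEM}(ξ), h = L/(N+1):
there exist C > 0 and N₀ such that for all N ≥ N₀ and every eigenvalue λ,
for some j ∈ {0,…,4N+4}, h²|λ|² ≤ 12c²sin²(2jπ/(4N+5)) + Ch ≤ 12c² + Ch. -/
theorem sysFEM_eigenvalue_estimates (L c ξ : ℝ) (hL : 0 < L) (hc : 0 < c)
    (hξ0 : 0 < ξ) (hξc : ξ < c) :
    ∃ C > (0:ℝ), ∃ N₀ : ℕ, ∀ N : ℕ, N₀ ≤ N →
      ∀ lam : ℂ, (∃ w : (Fin (N+1) ⊕ Fin (N+1)) → ℂ, w ≠ 0 ∧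
          ((sysFEM c (L/((N:ℝ)+1)) ξ N).map (fun x => (x:ℂ))).mulVec w = lam • w) →
        ∃ j : ℕ, j ≤ 4*N+4 ∧
          (L/((N:ℝ)+1))^2 * ‖lam‖^2 ≤
            12*c^2*(Real.sin (2*(j:ℝ)*Real.pi/(4*(N:ℝ)+5)))^2 + C*(L/((N:ℝ)+1)) ∧
          (L/((N:ℝ)+1))^2 * ‖lam‖^2 ≤ 12*c^2 + C*(L/((N:ℝ)+1)) := by
  refine ⟨3 * c ^ 2 / L, by positivity, 0, fun N _ z ⟨w, hw0, hw⟩ => ?_⟩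
  have hbound := sysFEM_eigenvalue_norm_sq_le (by nlinarith) hw0 hw
  have hsin := mul_le_mul_of_nonneg_left (one_sub_le_sin_sq_angle_succ N)
    (by positivity : 0 ≤ 12 * c ^ 2)
  have hCh : 12 * c ^ 2 * (1 / (4 * ((N : ℝ) + 1) ^ 2)) ≤ 3 * c ^ 2 / L * (L / ((N : ℝ) + 1)) :=
    calc 12 * c ^ 2 * (1 / (4 * ((N : ℝ) + 1) ^ 2)) = 3 * c ^ 2 / ((N : ℝ) + 1) ^ 2 := by
          field_simp; ring
      _ ≤ 3 * c ^ 2 / ((N : ℝ) + 1) := by gcongr; nlinarith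
      _ = 3 * c ^ 2 / L * (L / ((N : ℝ) + 1)) := by field_simp
  have hCh0 : 0 ≤ 3 * c ^ 2 / L * (L / ((N : ℝ) + 1)) := by positivity
  refine ⟨N + 1, by omega, ?_, by linarith⟩
  push_cast
  linarith
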